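/- Let n ≥ 2, let a, b satisfy 0 < a ≤ 1, 0 < b ≤ 1/2, 2a ≥ 1 + b, fix c ∈ (0,1), and let F = lim sup_{k→∞} F_k be the associated (a,b)-set of divergence. Then for every 0 < c₀ ≤ 1, the Hausdorff dimension of F ∩ [0,c₀]ⁿ is at most α := 1/2 + (n−1)a + b; equivalently, H^β(F ∩ [0,c₀]ⁿ) = 0 for every β > α. -/

import Mathlib

open MeasureTheory
open scoped ENNReal

/-- `R_k = 2^k`. -/
noncomputable def Rk (k : ℕ) : ℝ := 2 ^ k

/-- `D_k = R_k^{(n−(n−1)a+nb)/(n+1)}`. -/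
noncomputable def Dk (n : ℕ) (a b : ℝ) (k : ℕ) : ℝ :=
  Rk k ^ (((n : ℝ) - ((n : ℝ) - 1) * a + (n : ℝ) * b) / ((n : ℝ) + 1))

/-- `Q_k = R_k^{((n−1)/(n+1))(2a−b−1)}`. -/
noncomputable def Qk (n : ℕ) (a b : ℝ) (k : ℕ) : ℝ :=
  Rk k ^ ((((n : ℝ) - 1) / ((n : ℝ) + 1)) * (2 * a - b - 1))

/-- An *admissible fraction* `(p₁/q, …, p_n/q)`: `q ≥ 1`, `gcd(p₁, q) = 1`, and the
`p_j` (`2 ≤ j ≤ n`) are arbitrary when `q` is odd, all even when `q ≡ 0 (mod 4)`, all odd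
when `q ≡ 2 (mod 4)`. -/
def Admissible (n : ℕ) [NeZero n] (p : Fin n → ℤ) (q : ℤ) : Prop :=
  1 ≤ q ∧ Int.gcd (p 0) q = 1 ∧
    (q % 4 = 0 → ∀ j : Fin n, j ≠ 0 → Even (p j)) ∧
    (q % 4 = 2 → ∀ j : Fin n, j ≠ 0 → Odd (p j))

/-- The slab of level `k` attached to an admissible fraction `(p₁/q,…,p_n/q)`: a closed box
of dimensions `cR_k^{−1/2} × cR_k^{−1} × ⋯ × cR_k^{−1}` centered at
`(2p₁R_k/(qD_k²), p₂/(D_k q), …, p_n/(D_k q))`. -/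
noncomputable def slab (n : ℕ) [NeZero n] (a b c : ℝ) (k : ℕ) (p : Fin n → ℤ) (q : ℤ) :
    Set (EuclideanSpace ℝ (Fin n)) :=
  {x | |x 0 - 2 * (p 0 : ℝ) * Rk k / ((q : ℝ) * (Dk n a b k) ^ 2)| ≤
        c * Rk k ^ (-(1 : ℝ) / 2) / 2 ∧
    ∀ j : Fin n, j ≠ 0 → |x j - (p j : ℝ) / (Dk n a b k * (q : ℝ))| ≤ c / Rk k / 2}

/-- `F_k`: the union of all slabs of level `k` over admissible fractions with
`1 ≤ q ≤ Q_k`. -/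
noncomputable def FkSet (n : ℕ) [NeZero n] (a b c : ℝ) (k : ℕ) :
    Set (EuclideanSpace ℝ (Fin n)) :=
  ⋃ (p : Fin n → ℤ) (q : ℤ) (_ : Admissible n p q) (_ : (q : ℝ) ≤ Qk n a b k),
    slab n a b c k p q

/-- The `(a,b)`-set of divergence `F = lim sup_{k→∞} F_k = ⋂_N ⋃_{k≥N} F_k`. -/
noncomputable def Fset (n : ℕ) [NeZero n] (a b c : ℝ) : Set (EuclideanSpace ℝ (Fin n)) :=
  ⋂ N : ℕ, ⋃ k : ℕ, ⋃ (_ : N ≤ k), FkSet n a b c k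

namespace DivergenceAux

noncomputable def EE (k : ℕ) (e : ℝ) : ℝ := (2:ℝ) ^ ((k:ℝ) * e)

lemma EE_pos (k : ℕ) (e : ℝ) : 0 < EE k e := Real.rpow_pos_of_pos two_pos _
lemma EE_add (k : ℕ) (e f : ℝ) : EE k e * EE k f = EE k (e + f) := by
  rw [EE, EE, EE, ← Real.rpow_add two_pos, mul_add]
lemma EE_npow (k : ℕ) (e : ℝ) (m : ℕ) : EE k e ^ m = EE k (e * m) := by
  rw [EE, EE, ← Real.rpow_natCast ((2:ℝ) ^ ((k:ℝ) * e)) m, ← Real.rpow_mul (by norm_num),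
    mul_assoc]
lemma EE_rpow (k : ℕ) (e f : ℝ) : EE k e ^ f = EE k (e * f) := by
  rw [EE, EE, ← Real.rpow_mul (by norm_num), mul_assoc]
lemma one_le_EE (k : ℕ) {e : ℝ} (he : 0 ≤ e) : 1 ≤ EE k e :=
  Real.one_le_rpow one_le_two (by positivity)
lemma EE_mono (k : ℕ) {e f : ℝ} (h : e ≤ f) : EE k e ≤ EE k f :=
  Real.rpow_le_rpow_of_exponent_le one_le_two (mul_le_mul_of_nonneg_left h (Nat.cast_nonneg k))
lemma EE_zero (k : ℕ) : EE k 0 = 1 := by simp [EE]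
lemma EE_div (k : ℕ) (e f : ℝ) : EE k e / EE k f = EE k (e - f) := by
  rw [EE, EE, EE, ← Real.rpow_sub two_pos, mul_sub]
lemma Rk_rpow (k : ℕ) (e : ℝ) : Rk k ^ e = EE k e := by
  rw [Rk, EE, ← Real.rpow_natCast (2:ℝ) k, ← Real.rpow_mul (by norm_num)]
lemma Rk_eq (k : ℕ) : Rk k = EE k 1 := by rw [← Real.rpow_one (Rk k), Rk_rpow]
lemma Rk_pos (k : ℕ) : 0 < Rk k := by rw [Rk_eq]; exact EE_pos _ _
lemma EE_anti (e : ℝ) (he : e ≤ 0) {k k' : ℕ} (h : k ≤ k') : EE k' e ≤ EE k e := by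
  apply Real.rpow_le_rpow_of_exponent_le one_le_two
  have : (k:ℝ) ≤ (k':ℝ) := by exact_mod_cast h
  nlinarith
lemma EE_eq_pow (k : ℕ) (e : ℝ) : EE k e = ((2:ℝ) ^ e) ^ k := by
  rw [EE, ← Real.rpow_natCast ((2:ℝ) ^ e) k, ← Real.rpow_mul (by norm_num), mul_comm]

/-- Exponents. -/
noncomputable def dd (n : ℕ) (a b : ℝ) : ℝ := ((n:ℝ) - ((n:ℝ)-1)*a + (n:ℝ)*b)/((n:ℝ)+1)
noncomputable def th (n : ℕ) (a b : ℝ) : ℝ := (((n:ℝ)-1)/((n:ℝ)+1))*(2*a-b-1)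

lemma Dk_eq (n : ℕ) (a b : ℝ) (k : ℕ) : Dk n a b k = EE k (dd n a b) := Rk_rpow k _
lemma Qk_eq (n : ℕ) (a b : ℝ) (k : ℕ) : Qk n a b k = EE k (th n a b) := Rk_rpow k _

section params
variable {n : ℕ} {a b : ℝ} (hn : 2 ≤ n) (ha0 : 0 < a) (ha1 : a ≤ 1) (hb0 : 0 < b)
  (hab : 1 + b ≤ 2 * a)

include hn ha1 hb0 in
lemma dd_pos : 0 < dd n a b := by
  have h2 : (2:ℝ) ≤ (n:ℝ) := by exact_mod_cast hn
  have : ((n:ℝ)-1)*a ≤ (n:ℝ)-1 := by nlinarith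
  unfold dd
  apply div_pos (by nlinarith) (by linarith)

include hn hab in
lemma th_nonneg : 0 ≤ th n a b := by
  have h2 : (2:ℝ) ≤ (n:ℝ) := by exact_mod_cast hn
  unfold th
  apply mul_nonneg (div_nonneg (by linarith) (by linarith)) (by linarith)

end params

/-- Center of a covering piece. -/
noncomputable def ctr (n : ℕ) [NeZero n] (a b : ℝ) (k : ℕ) (p : Fin n → ℤ) (q m : ℤ) : Fin n → ℝ :=
  fun j => if j = 0 then
      2 * (p 0 : ℝ) * Rk k / ((q : ℝ) * (Dk n a b k) ^ 2) + 2 * EE k (-1) * (m : ℝ)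
    else (p j : ℝ) / (Dk n a b k * (q : ℝ))

/-- A covering piece: a cube of half-side `2^{-k}`. -/
noncomputable def piece (n : ℕ) [NeZero n] (a b : ℝ) (k : ℕ) (p : Fin n → ℤ) (q m : ℤ) :
    Set (EuclideanSpace ℝ (Fin n)) :=
  {x | ∀ j, |x j - ctr n a b k p q m j| ≤ EE k (-1)}

lemma piece_diam (n : ℕ) [NeZero n] (a b : ℝ) (k : ℕ) (p : Fin n → ℤ) (q m : ℤ) :
    EMetric.diam (piece n a b k p q m) ≤ ENNReal.ofReal (2 * n * EE k (-1)) := by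
  apply EMetric.diam_le
  intro x hx y hy
  rw [edist_dist]
  apply ENNReal.ofReal_le_ofReal
  rw [EuclideanSpace.dist_eq]
  have h1 : ∀ i, dist (x i) (y i) ≤ 2 * EE k (-1) := by
    intro i
    have hxi := hx i
    have hyi := hy i
    rw [Real.dist_eq]
    calc |x i - y i| ≤ |x i - ctr n a b k p q m i| + |ctr n a b k p q m i - y i| :=
          abs_sub_le _ _ _
    _ = |x i - ctr n a b k p q m i| + |y i - ctr n a b k p q m i| := by rw [abs_sub_comm (ctr n a b k p q m i)]
    _ ≤ 2 * EE k (-1) := by linarith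
  have hEpos := EE_pos k (-1)
  have hn0 : (1:ℝ) ≤ (n:ℝ) := by exact_mod_cast Nat.one_le_iff_ne_zero.mpr (NeZero.ne n)
  have hsum : (∑ i, dist (x i) (y i) ^ 2) ≤ (2 * (n:ℝ) * EE k (-1)) ^ 2 := by
    calc (∑ i, dist (x i) (y i) ^ 2) ≤ ∑ _i : Fin n, (2 * EE k (-1)) ^ 2 := by
          apply Finset.sum_le_sum
          intro i _
          have := h1 i
          have := dist_nonneg (x := x i) (y := y i)
          nlinarith
    _ = (n:ℝ) * (2 * EE k (-1)) ^ 2 := by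
          rw [Finset.sum_const, Finset.card_univ, Fintype.card_fin, nsmul_eq_mul]
    _ ≤ (2 * (n:ℝ) * EE k (-1)) ^ 2 := by nlinarith
  calc Real.sqrt (∑ i, dist (x i) (y i) ^ 2) ≤ Real.sqrt ((2 * (n:ℝ) * EE k (-1)) ^ 2) :=
        Real.sqrt_le_sqrt hsum
  _ = 2 * (n:ℝ) * EE k (-1) := Real.sqrt_sq (by positivity)

/-- The finite index set of relevant `(p, q, m)` at level `k`. -/
noncomputable def idx (n : ℕ) [NeZero n] (a b : ℝ) (k : ℕ) : Finset ((Fin n → ℤ) × ℤ × ℤ) :=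
  (Fintype.piFinset fun j : Fin n => if j = 0
      then Finset.Icc (-⌈EE k (th n a b + 2 * dd n a b - 1)⌉)
        ⌈EE k (th n a b + 2 * dd n a b - 1)⌉
      else Finset.Icc (-⌈2 * EE k (dd n a b + th n a b)⌉)
        ⌈2 * EE k (dd n a b + th n a b)⌉) ×ˢ
    (Finset.Icc (1:ℤ) ⌈EE k (th n a b)⌉ ×ˢ
      Finset.Icc (-⌈EE k ((1:ℝ)/2)⌉) ⌈EE k ((1:ℝ)/2)⌉)

lemma card_Icc_sym_le (x : ℝ) (hx : 0 ≤ x) :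
    ((Finset.Icc (-⌈x⌉) ⌈x⌉).card : ℝ) ≤ 2 * x + 3 := by
  have h0 : (0:ℤ) ≤ ⌈x⌉ := Int.ceil_nonneg hx
  rw [Int.card_Icc]
  have h1 : (⌈x⌉ + 1 - -⌈x⌉) = 2*⌈x⌉ + 1 := by ring
  rw [h1]
  have h2 : ((2*⌈x⌉+1).toNat : ℝ) = ((2*⌈x⌉+1 : ℤ) : ℝ) := by
    exact_mod_cast congrArg (fun z : ℤ => (z : ℝ)) (Int.toNat_of_nonneg (by omega : (0:ℤ) ≤ 2*⌈x⌉+1))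
  rw [h2]
  push_cast
  have := Int.ceil_lt_add_one x
  have : (⌈x⌉ : ℝ) < x + 1 := this
  linarith

lemma card_Icc_one_le (x : ℝ) (hx : 1 ≤ x) :
    ((Finset.Icc (1:ℤ) ⌈x⌉).card : ℝ) ≤ 2 * x := by
  have h0 : (1:ℤ) ≤ ⌈x⌉ := by exact_mod_cast Int.one_le_ceil_iff.mpr (by linarith)
  rw [Int.card_Icc]
  have h2 : ((⌈x⌉ + 1 - 1).toNat : ℝ) = ((⌈x⌉ : ℤ) : ℝ) := by
    rw [show (⌈x⌉ + 1 - 1) = ⌈x⌉ by ring]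
    exact_mod_cast congrArg (fun z : ℤ => (z : ℝ)) (Int.toNat_of_nonneg (by omega : (0:ℤ) ≤ ⌈x⌉))
  rw [h2]
  have := Int.ceil_lt_add_one x
  have h3 : (⌈x⌉ : ℝ) < x + 1 := this
  linarith

lemma exp_id1 {n : ℕ} (hn : 2 ≤ n) (a b : ℝ) :
    (th n a b + 2 * dd n a b - 1) +
      ((dd n a b + th n a b) * ((n - 1 : ℕ) : ℝ) + (th n a b + 1/2))
      = 1/2 + ((n:ℝ) - 1) * a + b := by
  have h1 : ((n - 1 : ℕ) : ℝ) = (n:ℝ) - 1 := by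
    have : 1 ≤ n := by omega
    push_cast [this]; ring
  have h2 : ((n:ℝ) + 1) ≠ 0 := by positivity
  rw [h1]
  unfold dd th
  field_simp
  ring

lemma exp_id2 {n : ℕ} (hn : 2 ≤ n) (a b : ℝ) (hb0 : 0 ≤ b) :
    (dd n a b + th n a b) * ((n - 1 : ℕ) : ℝ) + (th n a b + 1/2)
      ≤ 1/2 + ((n:ℝ) - 1) * a + b := by
  have h1 : ((n - 1 : ℕ) : ℝ) = (n:ℝ) - 1 := by
    have : 1 ≤ n := by omega
    push_cast [this]; ring
  have h2 : ((n:ℝ) + 1) ≠ 0 := by positivity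
  have key : (dd n a b + th n a b) * ((n - 1 : ℕ) : ℝ) + (th n a b + 1/2)
      = 1/2 + ((n:ℝ) - 1) * a := by
    rw [h1]; unfold dd th; field_simp; ring
  rw [key]; linarith

lemma prod_ite_card {n : ℕ} [NeZero n] (A B : ℕ) :
    (∏ j : Fin n, (if j = 0 then A else B)) = A * B ^ (n - 1) := by
  rw [← Finset.mul_prod_erase Finset.univ _ (Finset.mem_univ (0 : Fin n)), if_pos rfl]
  congr 1
  rw [Finset.prod_congr rfl (fun j hj => if_neg (Finset.ne_of_mem_erase hj)),
    Finset.prod_const, Finset.card_erase_of_mem (Finset.mem_univ _), Finset.card_univ,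
    Fintype.card_fin]

lemma idx_card_le {n : ℕ} [NeZero n] {a b : ℝ} (hn : 2 ≤ n) (ha0 : 0 < a) (ha1 : a ≤ 1)
    (hb0 : 0 < b) (hab : 1 + b ≤ 2 * a) (k : ℕ) :
    ((idx n a b k).card : ℝ) ≤ 140 * 7 ^ (n - 1) * EE k (1/2 + ((n:ℝ) - 1) * a + b) := by
  have hdd := dd_pos hn ha1 hb0 (a := a)
  have hth := th_nonneg hn hab (b := b)
  set P := EE k (th n a b + 2 * dd n a b - 1) with hPdef
  set U := EE k (dd n a b + th n a b) with hUdef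
  set V := EE k (th n a b) with hVdef
  set W := EE k ((1:ℝ)/2) with hWdef
  have hP : 0 ≤ P := (EE_pos _ _).le
  have hU1 : 1 ≤ U := one_le_EE _ (by linarith)
  have hV1 : 1 ≤ V := one_le_EE _ hth
  have hW1 : 1 ≤ W := one_le_EE _ (by norm_num)
  have hcard : ((idx n a b k).card : ℝ)
      = ((Finset.Icc (-⌈P⌉) ⌈P⌉).card : ℝ) * ((Finset.Icc (-⌈2*U⌉) ⌈2*U⌉).card : ℝ) ^ (n-1)
        * (((Finset.Icc (1:ℤ) ⌈V⌉).card : ℝ) * ((Finset.Icc (-⌈W⌉) ⌈W⌉).card : ℝ)) := by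
    rw [idx, Finset.card_product, Finset.card_product, Fintype.card_piFinset]
    have : ∀ j : Fin n, ((if j = 0
        then Finset.Icc (-⌈P⌉) ⌈P⌉ else Finset.Icc (-⌈2*U⌉) ⌈2*U⌉)).card
        = (if j = 0 then (Finset.Icc (-⌈P⌉) ⌈P⌉).card else (Finset.Icc (-⌈2*U⌉) ⌈2*U⌉).card) :=
      fun j => apply_ite Finset.card _ _ _
    rw [Finset.prod_congr rfl (fun j _ => this j), prod_ite_card]
    push_cast
    ring
  have b0 : ((Finset.Icc (-⌈P⌉) ⌈P⌉).card : ℝ) ≤ 5 * (P + 1) := by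
    have := card_Icc_sym_le P hP; linarith
  have b1 : ((Finset.Icc (-⌈2*U⌉) ⌈2*U⌉).card : ℝ) ≤ 7 * U := by
    have := card_Icc_sym_le (2*U) (by linarith); linarith
  have bq : ((Finset.Icc (1:ℤ) ⌈V⌉).card : ℝ) ≤ 2 * V := card_Icc_one_le V hV1
  have bm : ((Finset.Icc (-⌈W⌉) ⌈W⌉).card : ℝ) ≤ 7 * W := by
    have := card_Icc_sym_le W (by linarith); linarith
  have e2 : U ^ (n-1) * (V * W)
      = EE k ((dd n a b + th n a b) * ((n - 1 : ℕ) : ℝ) + (th n a b + 1/2)) := by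
    rw [hUdef, hVdef, hWdef, EE_npow, EE_add, EE_add]
  have e1 : P * (U ^ (n-1) * (V * W))
      = EE k ((th n a b + 2 * dd n a b - 1) +
          ((dd n a b + th n a b) * ((n - 1 : ℕ) : ℝ) + (th n a b + 1/2))) := by
    rw [e2, hPdef, EE_add]
  calc ((idx n a b k).card : ℝ)
      = _ := hcard
    _ ≤ (5 * (P+1)) * (7 * U) ^ (n-1) * ((2 * V) * (7 * W)) := by
        gcongr <;> positivity
    _ = 70 * 7 ^ (n-1) * (P * (U ^ (n-1) * (V * W)) + U ^ (n-1) * (V * W)) := by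
        rw [mul_pow]; ring
    _ ≤ 70 * 7 ^ (n-1) * (EE k (1/2 + ((n:ℝ) - 1) * a + b) + EE k (1/2 + ((n:ℝ) - 1) * a + b)) := by
        have hle1 : P * (U ^ (n-1) * (V * W)) ≤ EE k (1/2 + ((n:ℝ) - 1) * a + b) := by
          rw [e1, exp_id1 hn a b]
        have hle2 : U ^ (n-1) * (V * W) ≤ EE k (1/2 + ((n:ℝ) - 1) * a + b) := by
          rw [e2]; exact EE_mono _ (exp_id2 hn a b hb0.le)
        have h7 : (0:ℝ) ≤ 70 * 7 ^ (n-1) := by positivity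
        nlinarith
    _ = 140 * 7 ^ (n-1) * EE k (1/2 + ((n:ℝ) - 1) * a + b) := by ring

/-- The covering family at stage `N`. -/
noncomputable def cov (n : ℕ) [NeZero n] (a b : ℝ) (N : ℕ) :
    ℕ × (Fin n → ℤ) × ℤ × ℤ → Set (EuclideanSpace ℝ (Fin n)) :=
  fun i => if i.2 ∈ idx n a b (N + i.1) then piece n a b (N + i.1) i.2.1 i.2.2.1 i.2.2.2 else ∅

set_option maxHeartbeats 1000000 in
lemma cover_subset {n : ℕ} [NeZero n] {a b c : ℝ} (hn : 2 ≤ n) (ha0 : 0 < a) (ha1 : a ≤ 1)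
    (hb0 : 0 < b) (hab : 1 + b ≤ 2 * a) (hc0 : 0 < c) (hc1 : c < 1) {c₀ : ℝ} (hc₀1 : c₀ ≤ 1)
    (N : ℕ) :
    Fset n a b c ∩ {x : EuclideanSpace ℝ (Fin n) | ∀ i, x i ∈ Set.Icc (0 : ℝ) c₀} ⊆
      ⋃ i, cov n a b N i := by
  have hdd := dd_pos hn ha1 hb0 (a := a)
  have hth := th_nonneg hn hab (b := b)
  rintro x ⟨hxF, hxB⟩
  rw [Fset, Set.mem_iInter] at hxF
  have hxN := hxF N
  simp only [Set.mem_iUnion] at hxN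
  obtain ⟨k, hNk, hxk⟩ := hxN
  rw [FkSet] at hxk
  simp only [Set.mem_iUnion] at hxk
  obtain ⟨p, q, hadm, hqQ, hxs⟩ := hxk
  rw [slab, Set.mem_setOf_eq] at hxs
  obtain ⟨hs0, hsj⟩ := hxs
  -- basic facts
  have hq1 : (1:ℝ) ≤ (q:ℝ) := by exact_mod_cast hadm.1
  have hqQ' : (q:ℝ) ≤ EE k (th n a b) := by rwa [Qk_eq] at hqQ
  have hDpos : 0 < Dk n a b k := by rw [Dk_eq]; exact EE_pos _ _
  have hRpos : 0 < Rk k := Rk_pos k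
  have hR1 : 1 ≤ Rk k := by rw [Rk_eq]; exact one_le_EE _ (by norm_num)
  have hx01 : ∀ i, 0 ≤ x i ∧ x i ≤ 1 := fun i =>
    ⟨(hxB i).1, le_trans (hxB i).2 hc₀1⟩
  have hhalf : Rk k ^ (-(1:ℝ)/2) = EE k (-(1:ℝ)/2) := Rk_rpow k _
  have hE12 : EE k (-(1:ℝ)/2) ≤ 1 := by
    have := EE_mono k (show (-(1:ℝ)/2) ≤ 0 by norm_num)
    rwa [EE_zero] at this
  have hEpos : (0:ℝ) < EE k (-1) := EE_pos _ _
  have hW1 : (1:ℝ) ≤ EE k ((1:ℝ)/2) := one_le_EE _ (by norm_num)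
  have hwid : c * Rk k ^ (-(1:ℝ)/2) / 2 ≤ EE k (-(1:ℝ)/2) / 2 := by
    rw [hhalf]
    have hEp : (0:ℝ) < EE k (-(1:ℝ)/2) := EE_pos _ _
    nlinarith
  set ξ : ℝ := 2 * (p 0 : ℝ) * Rk k / ((q : ℝ) * (Dk n a b k) ^ 2) with hξdef
  -- bound on p 0
  have hden : (0:ℝ) < (q:ℝ) * (Dk n a b k) ^ 2 := by positivity
  have hξ2 : |ξ| ≤ 2 := by
    have h1 : |ξ| - |x 0| ≤ |ξ - x 0| := by
      have := abs_sub_abs_le_abs_sub ξ (x 0); linarith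
    have h2 : |ξ - x 0| = |x 0 - ξ| := abs_sub_comm _ _
    have h3 : |x 0| ≤ 1 := abs_le.mpr ⟨by linarith [(hx01 0).1], (hx01 0).2⟩
    have h4 : |x 0 - ξ| ≤ 1 := le_trans hs0 (by nlinarith [EE_pos k (-(1:ℝ)/2)])
    linarith
  have hp0r : |(p 0 : ℝ)| ≤ (q:ℝ) * (Dk n a b k) ^ 2 / Rk k := by
    rw [hξdef, abs_div, abs_of_pos hden] at hξ2
    have h5 : |2 * (p 0 : ℝ) * Rk k| ≤ 2 * ((q:ℝ) * (Dk n a b k) ^ 2) :=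
      (div_le_iff₀ hden).mp hξ2
    rw [abs_mul, abs_mul, abs_two, abs_of_pos hRpos] at h5
    rw [le_div_iff₀ hRpos]
    nlinarith [abs_nonneg (p 0 : ℝ)]
  have hp0P : |(p 0 : ℝ)| ≤ EE k (th n a b + 2 * dd n a b - 1) := by
    refine le_trans hp0r ?_
    have step : (q:ℝ) * (Dk n a b k) ^ 2 / Rk k
        ≤ EE k (th n a b) * EE k (dd n a b) ^ 2 / EE k 1 := by
      rw [Dk_eq, Rk_eq]
      gcongr <;> first | exact hqQ' | exact (EE_pos _ _).le
    refine le_trans step (le_of_eq ?_)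
    rw [EE_npow, EE_add, EE_div]
    congr 1
    push_cast
    ring
  have hp0mem : p 0 ∈ Finset.Icc (-⌈EE k (th n a b + 2 * dd n a b - 1)⌉)
      ⌈EE k (th n a b + 2 * dd n a b - 1)⌉ := by
    rw [Finset.mem_Icc]
    have hcl := Int.le_ceil (EE k (th n a b + 2 * dd n a b - 1))
    have := abs_le.mp (le_trans hp0P hcl)
    constructor
    · exact_mod_cast this.1
    · exact_mod_cast this.2
  -- bound on p j
  have hpjmem : ∀ j : Fin n, j ≠ 0 → p j ∈ Finset.Icc (-⌈2 * EE k (dd n a b + th n a b)⌉)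
      ⌈2 * EE k (dd n a b + th n a b)⌉ := by
    intro j hj
    have hsl := hsj j hj
    have hbd : c / Rk k / 2 ≤ 1 := by
      have h1 : c / Rk k ≤ 1 := (div_le_one hRpos).mpr (by linarith)
      linarith
    have hxj : |x j| ≤ 1 := abs_le.mpr ⟨by linarith [(hx01 j).1], (hx01 j).2⟩
    have hdenj : (0:ℝ) < Dk n a b k * (q:ℝ) := by positivity
    have h2 : |(p j : ℝ) / (Dk n a b k * (q:ℝ))| ≤ 2 := by
      have h1 : |(p j : ℝ) / (Dk n a b k * (q:ℝ))| - |x j|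
          ≤ |(p j : ℝ) / (Dk n a b k * (q:ℝ)) - x j| := by
        have := abs_sub_abs_le_abs_sub ((p j : ℝ) / (Dk n a b k * (q:ℝ))) (x j)
        linarith
      have h2' : |(p j : ℝ) / (Dk n a b k * (q:ℝ)) - x j|
          = |x j - (p j : ℝ) / (Dk n a b k * (q:ℝ))| := abs_sub_comm _ _
      linarith
    have h3 : |(p j : ℝ)| ≤ 2 * (Dk n a b k * (q:ℝ)) := by
      rw [abs_div, abs_of_pos hdenj] at h2
      have := (div_le_iff₀ hdenj).mp h2
      linarith
    have h4 : |(p j : ℝ)| ≤ 2 * EE k (dd n a b + th n a b) := by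
      refine le_trans h3 ?_
      rw [← EE_add]
      have : Dk n a b k * (q:ℝ) ≤ EE k (dd n a b) * EE k (th n a b) := by
        rw [Dk_eq]
        gcongr
        exact (EE_pos _ _).le
      nlinarith [EE_pos k (dd n a b), EE_pos k (th n a b)]
    rw [Finset.mem_Icc]
    have hcl := Int.le_ceil (2 * EE k (dd n a b + th n a b))
    have := abs_le.mp (le_trans h4 hcl)
    exact ⟨by exact_mod_cast this.1, by exact_mod_cast this.2⟩
  -- q membership
  have hqmem : q ∈ Finset.Icc (1:ℤ) ⌈EE k (th n a b)⌉ := by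
    rw [Finset.mem_Icc]
    refine ⟨hadm.1, ?_⟩
    have := le_trans hqQ' (Int.le_ceil _)
    exact_mod_cast this
  -- the shift m
  set y : ℝ := (x 0 - ξ) / (2 * EE k (-1)) with hydef
  set m : ℤ := round y with hmdef
  have hyb : |y| ≤ EE k ((1:ℝ)/2) / 4 := by
    rw [hydef, abs_div, abs_of_pos (by linarith : (0:ℝ) < 2 * EE k (-1))]
    rw [div_le_iff₀ (by linarith : (0:ℝ) < 2 * EE k (-1))]
    have h1 : |x 0 - ξ| ≤ EE k (-(1:ℝ)/2) / 2 := le_trans hs0 hwid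
    have h2 : EE k (-(1:ℝ)/2) / 2 = EE k ((1:ℝ)/2) / 4 * (2 * EE k (-1)) := by
      have : EE k ((1:ℝ)/2) * EE k (-1) = EE k (-(1:ℝ)/2) := by
        rw [EE_add]; norm_num
      nlinarith
    linarith
  have hmabs : |(m : ℝ)| ≤ EE k ((1:ℝ)/2) := by
    have h1 := abs_le.mp (abs_sub_round y)
    have h2 := abs_le.mp hyb
    rw [hmdef]
    exact abs_le.mpr ⟨by linarith, by linarith⟩
  have hmmem : m ∈ Finset.Icc (-⌈EE k ((1:ℝ)/2)⌉) ⌈EE k ((1:ℝ)/2)⌉ := by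
    rw [Finset.mem_Icc]
    have := abs_le.mp (le_trans hmabs (Int.le_ceil _))
    exact ⟨by exact_mod_cast this.1, by exact_mod_cast this.2⟩
  -- membership in idx
  have hidxmem : (p, q, m) ∈ idx n a b k := by
    rw [idx, Finset.mem_product, Finset.mem_product]
    refine ⟨?_, hqmem, hmmem⟩
    rw [Fintype.mem_piFinset]
    intro j
    by_cases hj : j = 0
    · rw [if_pos hj, hj]; exact hp0mem
    · rw [if_neg hj]; exact hpjmem j hj
  -- membership in piece
  have hpiecemem : x ∈ piece n a b k p q m := by
    intro j
    by_cases hj : j = 0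
    · subst hj
      rw [ctr, if_pos rfl]
      have h2E : (2:ℝ) * EE k (-1) ≠ 0 := by nlinarith
      have hkey : x 0 - (2 * (p 0 : ℝ) * Rk k / ((q : ℝ) * (Dk n a b k) ^ 2)
          + 2 * EE k (-1) * (m:ℝ)) = 2 * EE k (-1) * (y - (m:ℝ)) := by
        rw [hydef, hξdef]
        field_simp
        ring
      rw [hkey, abs_mul, abs_of_pos (by linarith : (0:ℝ) < 2 * EE k (-1))]
      have h1 : |y - (m:ℝ)| ≤ 1/2 := by rw [hmdef]; exact abs_sub_round y
      nlinarith
    · rw [ctr, if_neg hj]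
      refine le_trans (hsj j hj) ?_
      have hE1 : EE k (-1) = 1 / Rk k := by
        rw [Rk_eq, eq_div_iff (ne_of_gt (EE_pos k 1)), EE_add]
        norm_num [EE_zero]
      rw [hE1, show c / Rk k / 2 = (c/2) / Rk k by ring]
      exact (div_le_div_iff_of_pos_right hRpos).mpr (by linarith)
  refine Set.mem_iUnion.mpr ⟨(k - N, p, q, m), ?_⟩
  rw [cov]
  have hkN : N + (k - N) = k := by omega
  simp only [hkN]
  rw [if_pos hidxmem]
  exact hpiecemem

set_option maxHeartbeats 1000000 in
lemma hausdorff_zero {n : ℕ} [NeZero n] {a b c : ℝ} (hn : 2 ≤ n) (ha0 : 0 < a) (ha1 : a ≤ 1)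
    (hb0 : 0 < b) (hab : 1 + b ≤ 2 * a) (hc0 : 0 < c) (hc1 : c < 1) {c₀ : ℝ} (hc₀1 : c₀ ≤ 1)
    (β : ℝ) (hβ : 1/2 + ((n:ℝ) - 1) * a + b < β) :
    μH[β] (Fset n a b c ∩ {x : EuclideanSpace ℝ (Fin n) | ∀ i, x i ∈ Set.Icc (0 : ℝ) c₀})
      = 0 := by
  have hn2 : (2:ℝ) ≤ (n:ℝ) := by exact_mod_cast hn
  set α : ℝ := 1/2 + ((n:ℝ) - 1) * a + b with hαdef
  have hα0 : 0 < α := by rw [hαdef]; nlinarith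
  have hβ0 : 0 < β := lt_trans hα0 hβ
  set s := Fset n a b c ∩ {x : EuclideanSpace ℝ (Fin n) | ∀ i, x i ∈ Set.Icc (0 : ℝ) c₀}
    with hsdef
  set t : ℝ := (2:ℝ) ^ (α - β) with htdef
  have ht0 : 0 < t := Real.rpow_pos_of_pos two_pos _
  have ht1 : t < 1 := Real.rpow_lt_one_of_one_lt_of_neg one_lt_two (by linarith)
  set K : ℝ := 140 * 7 ^ (n-1) * (2*(n:ℝ)) ^ β with hKdef
  have hK0 : 0 ≤ K := by
    rw [hKdef]
    have : (0:ℝ) ≤ (2*(n:ℝ)) ^ β := Real.rpow_nonneg (by positivity) _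
    positivity
  have hoft1 : ENNReal.ofReal t < 1 := by
    rw [show (1:ℝ≥0∞) = ENNReal.ofReal 1 by simp]
    exact ENNReal.ofReal_lt_ofReal_iff_of_nonneg ht0.le |>.mpr ht1
  -- the liminf bound
  have hmain : μH[β] s ≤
      Filter.liminf (fun N => ∑' i : ℕ × (Fin n → ℤ) × ℤ × ℤ,
        EMetric.diam (cov n a b N i) ^ β) Filter.atTop := by
    apply MeasureTheory.Measure.hausdorffMeasure_le_liminf_tsum β s
      (fun N => ENNReal.ofReal (2 * (n:ℝ) * EE N (-1)))
    · -- radii tend to zero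
      rw [show (0:ℝ≥0∞) = ENNReal.ofReal 0 by simp]
      apply ENNReal.tendsto_ofReal
      have h1 : Filter.Tendsto (fun N : ℕ => ((2:ℝ)^(-1:ℝ)) ^ N) Filter.atTop (nhds 0) := by
        apply tendsto_pow_atTop_nhds_zero_of_lt_one
        · rw [Real.rpow_neg_one]; norm_num
        · rw [Real.rpow_neg_one]; norm_num
      have h2 : (fun N : ℕ => 2 * (n:ℝ) * EE N (-1))
          = fun N : ℕ => 2 * (n:ℝ) * ((2:ℝ)^(-1:ℝ)) ^ N := by
        funext N; rw [EE_eq_pow]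
      rw [h2]
      simpa using h1.const_mul (2 * (n:ℝ))
    · -- diameters small
      apply Filter.Eventually.of_forall
      intro N i
      rw [cov]
      split_ifs with hmem
      · refine le_trans (piece_diam _ _ _ _ _ _ _) (ENNReal.ofReal_le_ofReal ?_)
        have := EE_anti (-1) (by norm_num) (Nat.le_add_right N i.1)
        nlinarith [Nat.cast_nonneg (α := ℝ) n]
      · simp
    · exact Filter.Eventually.of_forall
        (fun N => cover_subset hn ha0 ha1 hb0 hab hc0 hc1 hc₀1 N)
  -- per-stage bound
  have key : ∀ N : ℕ, (∑' i : ℕ × (Fin n → ℤ) × ℤ × ℤ,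
      EMetric.diam (cov n a b N i) ^ β)
      ≤ ENNReal.ofReal K * ENNReal.ofReal t ^ N * (1 - ENNReal.ofReal t)⁻¹ := by
    intro N
    rw [ENNReal.tsum_prod']
    have inner : ∀ k' : ℕ, (∑' j : (Fin n → ℤ) × ℤ × ℤ,
        EMetric.diam (cov n a b N (k', j)) ^ β) ≤ ENNReal.ofReal (K * t ^ (N + k')) := by
      intro k'
      set k := N + k' with hkdef
      have hzero : ∀ j ∉ idx n a b k, EMetric.diam (cov n a b N (k', j)) ^ β = 0 := by
        intro j hj
        rw [cov]
        dsimp only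
        rw [if_neg hj]
        rw [show EMetric.diam (∅ : Set (EuclideanSpace ℝ (Fin n))) = 0 from EMetric.diam_empty]
        exact ENNReal.zero_rpow_of_pos hβ0
      rw [tsum_eq_sum hzero]
      have hterm : ∀ j ∈ idx n a b k, EMetric.diam (cov n a b N (k', j)) ^ β
          ≤ ENNReal.ofReal (2 * (n:ℝ) * EE k (-1)) ^ β := by
        intro j hj
        rw [cov]
        dsimp only
        rw [if_pos hj]
        exact ENNReal.rpow_le_rpow (piece_diam _ _ _ _ _ _ _) hβ0.le
      refine le_trans (Finset.sum_le_card_nsmul _ _ _ hterm) ?_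
      rw [nsmul_eq_mul]
      have hEk : (0:ℝ) < 2 * (n:ℝ) * EE k (-1) := by
        have := EE_pos k (-1); nlinarith
      have hc1' : ((idx n a b k).card : ℝ≥0∞) ≤ ENNReal.ofReal (140 * 7 ^ (n-1) * EE k α) := by
        rw [← ENNReal.ofReal_natCast]
        exact ENNReal.ofReal_le_ofReal (idx_card_le hn ha0 ha1 hb0 hab k)
      have hc2 : (ENNReal.ofReal (2 * (n:ℝ) * EE k (-1))) ^ β
          = ENNReal.ofReal ((2 * (n:ℝ) * EE k (-1)) ^ β) :=
        ENNReal.ofReal_rpow_of_pos hEk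
      calc ((idx n a b k).card : ℝ≥0∞) * (ENNReal.ofReal (2 * (n:ℝ) * EE k (-1))) ^ β
          ≤ ENNReal.ofReal (140 * 7 ^ (n-1) * EE k α)
            * ENNReal.ofReal ((2 * (n:ℝ) * EE k (-1)) ^ β) := by
            rw [← hc2]; exact mul_le_mul' hc1' le_rfl
        _ = ENNReal.ofReal (140 * 7 ^ (n-1) * EE k α * (2 * (n:ℝ) * EE k (-1)) ^ β) := by
            rw [← ENNReal.ofReal_mul (mul_nonneg (by positivity) (EE_pos k α).le)]
        _ = ENNReal.ofReal (K * t ^ k) := by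
            congr 1
            have heq : EE k α * (2 * (n:ℝ) * EE k (-1)) ^ β = (2*(n:ℝ)) ^ β * t ^ k := by
              rw [Real.mul_rpow (by positivity) (EE_pos k (-1)).le, EE_rpow]
              have h3 : EE k α * ((2*(n:ℝ)) ^ β * EE k (-1 * β))
                  = (2*(n:ℝ)) ^ β * (EE k α * EE k (-1 * β)) := by ring
              rw [h3, EE_add, show α + -1 * β = α - β by ring, EE_eq_pow, htdef]
            calc 140 * 7 ^ (n-1) * EE k α * (2 * (n:ℝ) * EE k (-1)) ^ β
                = 140 * 7 ^ (n-1) * (EE k α * (2 * (n:ℝ) * EE k (-1)) ^ β) := by ring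
              _ = 140 * 7 ^ (n-1) * ((2*(n:ℝ)) ^ β * t ^ k) := by rw [heq]
              _ = K * t ^ k := by rw [hKdef]; ring
    calc (∑' k' : ℕ, ∑' j : (Fin n → ℤ) × ℤ × ℤ, EMetric.diam (cov n a b N (k', j)) ^ β)
        ≤ ∑' k' : ℕ, ENNReal.ofReal (K * t ^ (N + k')) := ENNReal.tsum_le_tsum inner
      _ = ∑' k' : ℕ, ENNReal.ofReal (K * t ^ N) * ENNReal.ofReal t ^ k' := by
          congr 1
          funext k'
          rw [← ENNReal.ofReal_pow ht0.le,
            ← ENNReal.ofReal_mul (mul_nonneg hK0 (pow_nonneg ht0.le N))]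
          congr 1
          rw [pow_add]
          ring
      _ = ENNReal.ofReal (K * t ^ N) * (1 - ENNReal.ofReal t)⁻¹ := by
          rw [ENNReal.tsum_mul_left, ENNReal.tsum_geometric]
      _ = ENNReal.ofReal K * ENNReal.ofReal t ^ N * (1 - ENNReal.ofReal t)⁻¹ := by
          rw [ENNReal.ofReal_mul hK0, ENNReal.ofReal_pow ht0.le]
  -- conclude
  have hlim : Filter.Tendsto
      (fun N : ℕ => ENNReal.ofReal K * ENNReal.ofReal t ^ N * (1 - ENNReal.ofReal t)⁻¹)
      Filter.atTop (nhds 0) := by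
    have h1 : Filter.Tendsto (fun N : ℕ => ENNReal.ofReal t ^ N) Filter.atTop (nhds 0) :=
      ENNReal.tendsto_pow_atTop_nhds_zero_of_lt_one hoft1
    have h2 := ENNReal.Tendsto.const_mul (a := ENNReal.ofReal K) h1 (Or.inr ENNReal.ofReal_ne_top)
    rw [mul_zero] at h2
    have hne : (1 - ENNReal.ofReal t)⁻¹ ≠ ⊤ := by
      rw [ENNReal.inv_ne_top]
      exact (tsub_pos_of_lt hoft1).ne'
    have h3 := ENNReal.Tendsto.mul_const h2 (Or.inr hne)
    rwa [zero_mul] at h3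
  have hliminf : Filter.liminf (fun N => ∑' i : ℕ × (Fin n → ℤ) × ℤ × ℤ,
      EMetric.diam (cov n a b N i) ^ β) Filter.atTop ≤ 0 := by
    calc Filter.liminf (fun N => ∑' i : ℕ × (Fin n → ℤ) × ℤ × ℤ,
        EMetric.diam (cov n a b N i) ^ β) Filter.atTop
        ≤ Filter.liminf (fun N : ℕ =>
            ENNReal.ofReal K * ENNReal.ofReal t ^ N * (1 - ENNReal.ofReal t)⁻¹)
          Filter.atTop := Filter.liminf_le_liminf (Filter.Eventually.of_forall key)
      _ = 0 := hlim.liminf_eq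
  exact le_antisymm (le_trans hmain hliminf) zero_le

end DivergenceAux

/-- **Upper bound for the dimension of the divergence set.** Let `n ≥ 2`, `0 < a ≤ 1`,
`0 < b ≤ 1/2`, `2a ≥ 1 + b`, `c ∈ (0,1)`, and let `F` be the associated `(a,b)`-set of
divergence. Then for every `0 < c₀ ≤ 1` the Hausdorff dimension of `F ∩ [0,c₀]ⁿ` is at
most `α = 1/2 + (n−1)a + b`. -/
theorem divergence_set_dimension_upper_bound (n : ℕ) [NeZero n] (hn : 2 ≤ n) (a b c : ℝ)
    (ha0 : 0 < a) (ha1 : a ≤ 1) (hb0 : 0 < b) (hb1 : b ≤ 1 / 2) (hab : 1 + b ≤ 2 * a)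
    (hc0 : 0 < c) (hc1 : c < 1) (c₀ : ℝ) (hc₀0 : 0 < c₀) (hc₀1 : c₀ ≤ 1) :
    dimH (Fset n a b c ∩ {x : EuclideanSpace ℝ (Fin n) | ∀ i, x i ∈ Set.Icc (0 : ℝ) c₀})
      ≤ ENNReal.ofReal (1 / 2 + ((n : ℝ) - 1) * a + b) := by
  have hn2 : (2:ℝ) ≤ (n:ℝ) := by exact_mod_cast hn
  have hα0 : (0:ℝ) < 1 / 2 + ((n : ℝ) - 1) * a + b := by nlinarith
  apply dimH_le
  intro d' hd'
  by_contra hcon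
  push_neg at hcon
  have hαd : 1 / 2 + ((n : ℝ) - 1) * a + b < (d' : ℝ) := by
    rw [← ENNReal.ofReal_coe_nnreal] at hcon
    exact (ENNReal.ofReal_lt_ofReal_iff_of_nonneg hα0.le).mp hcon
  have hz := DivergenceAux.hausdorff_zero hn ha0 ha1 hb0 hab hc0 hc1 hc₀1 (d' : ℝ) hαd
  rw [hz] at hd'
  exact ENNReal.zero_ne_top hd'
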